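/- For all δ, q > 0 there exist C, λ, ρ > 0 such that for all sufficiently large n the following holds. Let 𝒞 be a set of colours of size qn, let D₀ be an n-vertex digraph on [n] with minimum semidegree at least δn, and let D = D₀ ∪ D(n, C/n) be uniformly coloured in 𝒞. Then, with probability at least 1 − exp(−λn), for every vertex u of D there is a set M of at least ρn edges of D that are pairwise vertex-disjoint and avoid u, such that for every edge xy ∈ M both ux and yu are edges of D, and the set of edges ⋃_{xy∈M} {ux, xy, yu} is rainbow. -/

import Mathlib

/-!
STATEMENT 8: For all δ, q > 0 there exist C, λ, ρ > 0 such that for all sufficiently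
large n: if 𝒞 is a colour set of size qn, D₀ an n-vertex digraph on [n] with minimum
semidegree at least δn, and D = D₀ ∪ D(n, C/n) uniformly coloured in 𝒞, then with
probability at least 1 − exp(−λn), for every vertex u there is a set M of at least ρn
pairwise vertex-disjoint edges avoiding u such that for every xy ∈ M both ux and yu
are edges of D, and ⋃_{xy∈M} {ux, xy, yu} is rainbow.
-/

open Finset Filter

-- Probability of an event under a weight function on a finite sample space.
open scoped Classical in
noncomputable def pr {Ω : Type*} [Fintype Ω] (w : Ω → ℝ) (E : Ω → Prop) : ℝ :=
  ∑ ω : Ω, if E ω then w ω else 0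

/-- Sample space for the uniformly coloured perturbed digraph on `[n]` with `k` colours. -/
abbrev DSample (n k : ℕ) := ((Fin n × Fin n) → Bool) × ((Fin n × Fin n) → Fin k)

/-- Product weight: random edges appear independently with probability `p`, colours
are uniform among the `k` colours. -/
noncomputable def dWeight (n k : ℕ) (p : ℝ) (ω : DSample n k) : ℝ :=
  (∏ e : Fin n × Fin n, if ω.1 e = true then p else 1 - p) * ((k : ℝ))⁻¹ ^ (n * n)

/-- Edges of the perturbed digraph `D₀ ∪ D(n,p)`. -/
def pEdge {n k : ℕ} (D₀ : Fin n → Fin n → Prop) (ω : DSample n k) (x y : Fin n) : Prop :=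
  x ≠ y ∧ (D₀ x y ∨ ω.1 (x, y) = true)

/-- Minimum semidegree at least `d`. -/
def MinSemidegree {n : ℕ} (D₀ : Fin n → Fin n → Prop) (d : ℝ) : Prop :=
  ∀ v : Fin n, d ≤ ({w | D₀ v w}.ncard : ℝ) ∧ d ≤ ({w | D₀ w v}.ncard : ℝ)

/-!
Fix a vertex `u` and disjoint sets `A ⊆ N⁺(u)`, `B ⊆ N⁻(u)` in `D₀` of size `m ≈ δn/2`.
If the random edges contain no matching of size `t = 4s ≈ 4γn` from `A` to `B`, then the
endpoints of a maximum matching give `S ⊆ A`, `T ⊆ B` of size `< t` such that no edge of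
`(A \ S) × (B \ T)` is present; for `p = C/n` this has probability at most
`4^m (1 - p)^((m - t)²) ≤ e^(-n)`.

Such a matching is determined by the edges alone, so its colours are still uniform. Call an
edge `xy` of it blocked if one of `ux, xy, yu` shares its colour with another edge of the `3t`
triangles. The triangles are edge-disjoint, so if `2s` edges are blocked, then at least `s`
triangle edges repeat the colour of a triangle edge outside this set; a union bound over these
configurations gives probability at most `2^(12s) (12s/k)^s ≤ e^(-2s)`. Otherwise the unblocked
edges form a rainbow set of `2s` triangles through `u`. A union bound over the `n` vertices
finishes the proof.
-/
section Probability

variable {Ω : Type*} [Fintype Ω] {w : Ω → ℝ}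

-- `pr` is defined with classical decidability; this restates it for any instance.
lemma pr_eq_sum_ite (w : Ω → ℝ) (E : Ω → Prop) [DecidablePred E] :
    pr w E = ∑ ω, if E ω then w ω else 0 := by
  unfold pr
  congr!

lemma pr_const (a : ℝ) (E : Ω → Prop) [DecidablePred E] :
    pr (fun _ => a) E = #(univ.filter E) * a := by
  rw [pr_eq_sum_ite, ← sum_filter, sum_const, nsmul_eq_mul]

lemma pr_mono (hw : ∀ ω, 0 ≤ w ω) {E F : Ω → Prop} (h : ∀ ω, E ω → F ω) :
    pr w E ≤ pr w F :=
  sum_le_sum fun ω _ => by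
    by_cases hE : E ω
    · simp [hE, h ω hE]
    · split_ifs <;> simp [hw ω]

lemma pr_add_pr_not (E : Ω → Prop) : pr w E + pr w (fun ω => ¬ E ω) = ∑ ω, w ω := by
  rw [pr, pr, ← sum_add_distrib]
  exact sum_congr rfl fun ω _ => by by_cases hE : E ω <;> simp [hE]

lemma pr_or_le (hw : ∀ ω, 0 ≤ w ω) (E F : Ω → Prop) :
    pr w (fun ω => E ω ∨ F ω) ≤ pr w E + pr w F := by
  rw [pr, pr, pr, ← sum_add_distrib]
  exact sum_le_sum fun ω _ => by
    by_cases hE : E ω <;> by_cases hF : F ω <;> simp [hE, hF, hw ω]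

lemma pr_exists_le {ι : Type*} (hw : ∀ ω, 0 ≤ w ω) (s : Finset ι) (E : ι → Ω → Prop) :
    pr w (fun ω => ∃ i ∈ s, E i ω) ≤ ∑ i ∈ s, pr w (E i) := by
  classical
  have hterm : ∀ ω i, 0 ≤ if E i ω then w ω else 0 := fun ω i => by split_ifs <;> simp [hw ω]
  simp only [pr_eq_sum_ite]
  rw [sum_comm]
  refine sum_le_sum fun ω _ => ?_
  split_ifs with h
  · obtain ⟨i, hi, hE⟩ := h
    calc w ω = if E i ω then w ω else 0 := by rw [if_pos hE]
      _ ≤ _ := single_le_sum (fun j _ => hterm ω j) hi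
  · exact sum_nonneg fun i _ => hterm ω i

lemma one_sub_sum_le_pr {ι : Type*} (hw : ∀ ω, 0 ≤ w ω) (hw₁ : ∑ ω, w ω = 1)
    (s : Finset ι) (Bad : ι → Ω → Prop) {E : Ω → Prop}
    (h : ∀ ω, (∀ i ∈ s, ¬ Bad i ω) → E ω) :
    1 - ∑ i ∈ s, pr w (Bad i) ≤ pr w E := by
  have hcompl : pr w (fun ω => ¬ E ω) ≤ ∑ i ∈ s, pr w (Bad i) := by
    refine (pr_mono hw fun ω hE => ?_).trans (pr_exists_le hw s Bad)
    by_contra hBad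
    exact hE (h ω fun i hi hi' => hBad ⟨i, hi, hi'⟩)
  linarith [pr_add_pr_not (w := w) E]

variable {α β : Type*} [Fintype α] [Fintype β]

lemma pr_prod_eq (w₁ : α → ℝ) (w₂ : β → ℝ) (E : α × β → Prop) :
    pr (fun ω => w₁ ω.1 * w₂ ω.2) E = ∑ a, w₁ a * pr w₂ (fun b => E (a, b)) := by
  rw [pr, Fintype.sum_prod_type]
  refine sum_congr rfl fun a _ => ?_
  rw [pr, mul_sum]
  exact sum_congr rfl fun b _ => by split_ifs <;> simp

lemma pr_prod_le {w₁ : α → ℝ} {w₂ : β → ℝ} (hw₁ : ∀ a, 0 ≤ w₁ a) (hsum : ∑ a, w₁ a = 1)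
    {E : α × β → Prop} {B : ℝ} (hB : ∀ a, pr w₂ (fun b => E (a, b)) ≤ B) :
    pr (fun ω => w₁ ω.1 * w₂ ω.2) E ≤ B := by
  rw [pr_prod_eq]
  calc ∑ a, w₁ a * pr w₂ (fun b => E (a, b)) ≤ ∑ a, w₁ a * B :=
        sum_le_sum fun a _ => mul_le_mul_of_nonneg_left (hB a) (hw₁ a)
    _ = B := by rw [← sum_mul, hsum, one_mul]

lemma pr_prod_fst (w₁ : α → ℝ) {w₂ : β → ℝ} (hsum : ∑ b, w₂ b = 1) (E : α → Prop) :
    pr (fun ω : α × β => w₁ ω.1 * w₂ ω.2) (fun ω => E ω.1) = pr w₁ E := by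
  rw [pr_prod_eq, pr]
  exact sum_congr rfl fun a _ => by by_cases hE : E a <;> simp [pr, hE, hsum]

end Probability

section Bernoulli

variable {I : Type*} [Fintype I] [DecidableEq I] {p : ℝ}

noncomputable def bernoulliWeight (p : ℝ) (g : I → Bool) : ℝ :=
  ∏ i, if g i = true then p else 1 - p

omit [DecidableEq I] in
lemma bernoulliWeight_nonneg (hp0 : 0 ≤ p) (hp1 : p ≤ 1) (g : I → Bool) :
    0 ≤ bernoulliWeight p g :=
  prod_nonneg fun i _ => by split_ifs <;> linarith

lemma sum_bernoulliWeight : ∑ g : I → Bool, bernoulliWeight p g = 1 := by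
  simp only [bernoulliWeight]
  rw [← Fintype.prod_sum (fun (_ : I) (b : Bool) => if b = true then p else 1 - p)]
  simp

lemma pr_bernoulliWeight_forall_false (U : Finset I) :
    pr (bernoulliWeight p) (fun g => ∀ i ∈ U, g i = false) = (1 - p) ^ #U := by
  let f : I → Bool → ℝ := fun i b => if b = true then (if i ∈ U then 0 else p) else 1 - p
  have hprod : ∀ g : I → Bool,
      (if ∀ i ∈ U, g i = false then bernoulliWeight p g else 0) = ∏ i, f i (g i) := by
    intro g
    by_cases hg : ∀ i ∈ U, g i = false
    · rw [if_pos hg]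
      refine prod_congr rfl fun i _ => ?_
      by_cases hi : i ∈ U <;> simp [f, hi, hg]
    · push Not at hg
      obtain ⟨i, hi, hgi⟩ := hg
      rw [ne_eq, Bool.not_eq_false] at hgi
      rw [if_neg fun hU => by simp [hU i hi] at hgi, eq_comm]
      exact prod_eq_zero (mem_univ i) (by simp [f, hi, hgi])
  rw [pr_eq_sum_ite, sum_congr rfl fun g _ => hprod g, ← Fintype.prod_sum f]
  have hsum : ∀ i, ∑ b, f i b = if i ∈ U then 1 - p else 1 := fun i => by
    by_cases hi : i ∈ U <;> simp [f, hi]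
  simp only [hsum, prod_ite_mem, univ_inter, prod_const]

end Bernoulli

section UniformColouring

variable {I : Type*} [Fintype I] [DecidableEq I] {k : ℕ}

variable (I k) in
noncomputable def uniformWeight (_c : I → Fin k) : ℝ :=
  (k : ℝ)⁻¹ ^ Fintype.card I

omit [DecidableEq I] in
lemma uniformWeight_nonneg (c : I → Fin k) : 0 ≤ uniformWeight I k c := by
  unfold uniformWeight
  positivity

lemma sum_uniformWeight (hk : 0 < k) : ∑ c, uniformWeight I k c = 1 := by
  unfold uniformWeight
  rw [sum_const, card_univ, Fintype.card_fun, Fintype.card_fin, nsmul_eq_mul, Nat.cast_pow,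
    inv_pow, mul_inv_cancel₀ (by positivity)]

lemma card_filter_forall_eq_le {β : Type*} [Fintype β] [DecidableEq β] (J : Finset I)
    (h : ∀ x ∈ J, I) (hh : ∀ x hx, h x hx ∉ J) :
    #(univ.filter fun c : I → β => ∀ x hx, c (h x hx) = c x)
      ≤ Fintype.card β ^ (Fintype.card I - #J) := by
  have hcard : Fintype.card (↥(Jᶜ) → β) = Fintype.card β ^ (Fintype.card I - #J) := by
    rw [Fintype.card_fun, Fintype.card_coe, card_compl]
  rw [← hcard, ← card_univ]
  refine card_le_card_of_injOn (fun c (x : ↥(Jᶜ)) => c x) (fun _ _ => mem_coe.2 (mem_univ _)) ?_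
  intro c₁ hc₁ c₂ hc₂ heq
  have hout : ∀ x, x ∉ J → c₁ x = c₂ x := fun x hx => congrFun heq ⟨x, mem_compl.2 hx⟩
  funext x
  by_cases hx : x ∈ J
  · rw [← (mem_filter.1 hc₁).2 x hx, ← (mem_filter.1 hc₂).2 x hx, hout _ (hh x hx)]
  · exact hout x hx

lemma pr_uniform_forall_eq_le (hk : 0 < k) (J : Finset I) (h : ∀ x ∈ J, I)
    (hh : ∀ x hx, h x hx ∉ J) :
    pr (uniformWeight I k) (fun c => ∀ x hx, c (h x hx) = c x) ≤ (k : ℝ)⁻¹ ^ #J := by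
  have hJ : #J ≤ Fintype.card I := card_le_univ J
  have hcount : (#(univ.filter fun c : I → Fin k => ∀ x hx, c (h x hx) = c x) : ℝ)
      ≤ (k : ℝ) ^ (Fintype.card I - #J) := by
    have := card_filter_forall_eq_le (β := Fin k) J h hh
    rw [Fintype.card_fin] at this
    exact_mod_cast this
  unfold uniformWeight
  rw [pr_const]
  calc _ ≤ (k : ℝ) ^ (Fintype.card I - #J) * (k : ℝ)⁻¹ ^ Fintype.card I :=
        mul_le_mul_of_nonneg_right hcount (by positivity)
    _ = (k : ℝ)⁻¹ ^ #J := by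
        rw [← Nat.sub_add_cancel hJ, pow_add (k : ℝ)⁻¹, Nat.add_sub_cancel, ← mul_assoc,
          ← mul_pow, mul_inv_cancel₀ (by positivity), one_pow, one_mul]

end UniformColouring

section RepeatedColours

lemma exists_subset_colour_repeats {α β : Type*} [DecidableEq α] [DecidableEq β]
    (S : Finset α) (c : α → β) :
    ∃ J ⊆ S, #(S.filter fun x => ∃ y ∈ S, y ≠ x ∧ c y = c x) ≤ 2 * #J ∧
      ∀ x ∈ J, ∃ y ∈ S \ J, c y = c x := by
  rcases S.eq_empty_or_nonempty with rfl | ⟨x₀, hx₀⟩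
  · exact ⟨∅, Subset.refl _, by simp, by simp⟩
  obtain ⟨r, hr⟩ : ∃ r : β → α, ∀ x ∈ S, r (c x) ∈ S ∧ c (r (c x)) = c x := by
    have : ∀ b, ∃ a, (∃ x ∈ S, c x = b) → a ∈ S ∧ c a = b := fun b => by
      by_cases hb : ∃ x ∈ S, c x = b
      · obtain ⟨x, hx, rfl⟩ := hb
        exact ⟨x, fun _ => ⟨hx, rfl⟩⟩
      · exact ⟨x₀, fun h => absurd h hb⟩
    choose r hr using this
    exact ⟨r, fun x hx => hr _ ⟨x, hx, rfl⟩⟩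
  -- `J` is `Q` minus one representative `r b` of each colour `b`
  set Q := S.filter fun x => ∃ y ∈ S, y ≠ x ∧ c y = c x
  set J := Q.filter fun x => x ≠ r (c x)
  have hQS : Q ⊆ S := filter_subset _ _
  refine ⟨J, (filter_subset _ _).trans hQS, ?_, fun x hx => ?_⟩
  · have hsplit : #J + #(Q.filter fun x => ¬ x ≠ r (c x)) = #Q :=
      card_filter_add_card_filter_not _
    have hreps : #(Q.filter fun x => ¬ x ≠ r (c x)) ≤ #J := by
      have hpartner : ∀ x ∈ Q, ∃ y ∈ S, y ≠ x ∧ c y = c x := fun x hx => (mem_filter.1 hx).2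
      choose! f hfS hfne hfc using hpartner
      refine card_le_card_of_injOn f (fun x hx => ?_) (fun x₁ hx₁ x₂ hx₂ heq => ?_)
      · obtain ⟨hxQ, hxr⟩ := mem_filter.1 hx
        refine mem_filter.2 ⟨mem_filter.2 ⟨hfS x hxQ, x, hQS hxQ, (hfne x hxQ).symm,
          (hfc x hxQ).symm⟩, ?_⟩
        rw [hfc x hxQ, ← not_not.1 hxr]
        exact hfne x hxQ
      · obtain ⟨hxQ₁, hxr₁⟩ := mem_filter.1 hx₁
        obtain ⟨hxQ₂, hxr₂⟩ := mem_filter.1 hx₂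
        have hc : c x₁ = c x₂ := by rw [← hfc x₁ hxQ₁, ← hfc x₂ hxQ₂]; exact congrArg c heq
        rw [not_not.1 hxr₁, not_not.1 hxr₂, hc]
    omega
  · obtain ⟨hxQ, hxr⟩ := mem_filter.1 hx
    obtain ⟨hrS, hrc⟩ := hr x (hQS hxQ)
    exact ⟨r (c x), mem_sdiff.2 ⟨hrS, fun hrJ => (mem_filter.1 hrJ).2 (by rw [hrc])⟩, hrc⟩

variable {I : Type*} [Fintype I] [DecidableEq I] {k : ℕ}

lemma pr_exists_colour_repeats_le (hk : 0 < k) (S : Finset I) (hSk : #S ≤ k) (r : ℕ) :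
    pr (uniformWeight I k) (fun c => ∃ J ⊆ S, r ≤ #J ∧ ∀ x ∈ J, ∃ y ∈ S \ J, c y = c x)
      ≤ 2 ^ #S * ((#S : ℝ) / k) ^ r := by
  set 𝒥 := S.powerset.filter fun J => r ≤ #J
  have hw : ∀ c, 0 ≤ uniformWeight I k c := uniformWeight_nonneg
  have hratio : (#S : ℝ) / k ≤ 1 := div_le_one_of_le₀ (by exact_mod_cast hSk) (by positivity)
  calc _ ≤ pr (uniformWeight I k) (fun c =>
          ∃ i ∈ 𝒥.sigma fun J => J.pi fun _ => S \ J, ∀ x hx, c (i.2 x hx) = c x) := by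
        refine pr_mono hw fun c ⟨J, hJS, hrJ, hJ⟩ => ?_
        choose h hhS hhc using hJ
        exact ⟨⟨J, h⟩, mem_sigma.2 ⟨mem_filter.2 ⟨mem_powerset.2 hJS, hrJ⟩, mem_pi.2 hhS⟩, hhc⟩
    _ ≤ ∑ i ∈ 𝒥.sigma (fun J => J.pi fun _ => S \ J), (k : ℝ)⁻¹ ^ #i.1 := by
        refine (pr_exists_le hw _ _).trans (sum_le_sum fun i hi => ?_)
        exact pr_uniform_forall_eq_le hk _ _
          fun x hx => (mem_sdiff.1 (mem_pi.1 (mem_sigma.1 hi).2 x hx)).2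
    _ = ∑ J ∈ 𝒥, ((#(S \ J) : ℝ) / k) ^ #J := by
        rw [sum_sigma]
        refine sum_congr rfl fun J _ => ?_
        simp only
        rw [sum_const, card_pi, prod_const, nsmul_eq_mul, div_pow, div_eq_mul_inv, inv_pow]
        push_cast
        rfl
    _ ≤ ∑ _J ∈ 𝒥, ((#S : ℝ) / k) ^ r := by
        refine sum_le_sum fun J hJ => ?_
        calc ((#(S \ J) : ℝ) / k) ^ #J ≤ ((#S : ℝ) / k) ^ #J := by
              gcongr
              exact sdiff_subset
          _ ≤ ((#S : ℝ) / k) ^ r :=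
              pow_le_pow_of_le_one (by positivity) hratio (mem_filter.1 hJ).2
    _ ≤ 2 ^ #S * ((#S : ℝ) / k) ^ r := by
        rw [sum_const, nsmul_eq_mul]
        gcongr
        calc (#𝒥 : ℝ) ≤ #S.powerset := by exact_mod_cast card_filter_le _ _
          _ = 2 ^ #S := by rw [card_powerset]; push_cast; rfl

end RepeatedColours

section Matching

variable {V : Type*}

def IsMatchingIn (A B : Finset V) (g : V × V → Bool) (M : Finset (V × V)) : Prop :=
  (∀ e ∈ M, e.1 ∈ A ∧ e.2 ∈ B ∧ g e = true) ∧
    (M : Set (V × V)).Pairwise fun e e' => e.1 ≠ e'.1 ∧ e.2 ≠ e'.2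

variable {A B : Finset V} {g : V × V → Bool} {M : Finset (V × V)}

lemma IsMatchingIn.mono (h : IsMatchingIn A B g M) {M' : Finset (V × V)} (hM' : M' ⊆ M) :
    IsMatchingIn A B g M' :=
  ⟨fun e he => h.1 e (hM' he), h.2.mono (coe_subset.2 hM')⟩

lemma IsMatchingIn.insert [DecidableEq V] (h : IsMatchingIn A B g M) {a b : V} (ha : a ∈ A)
    (hb : b ∈ B) (hg : g (a, b) = true) (haM : a ∉ M.image Prod.fst)
    (hbM : b ∉ M.image Prod.snd) : IsMatchingIn A B g (insert (a, b) M) := by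
  refine ⟨fun e he => ?_, ?_⟩
  · rcases mem_insert.1 he with rfl | he
    exacts [⟨ha, hb, hg⟩, h.1 e he]
  · rw [coe_insert, Set.pairwise_insert]
    refine ⟨h.2, fun e he _ => ?_⟩
    have h₁ : a ≠ e.1 := fun h' => haM (mem_image.2 ⟨e, he, h'.symm⟩)
    have h₂ : b ≠ e.2 := fun h' => hbM (mem_image.2 ⟨e, he, h'.symm⟩)
    exact ⟨⟨h₁, h₂⟩, h₁.symm, h₂.symm⟩

lemma exists_cover_of_not_exists_matching [DecidableEq V] (t : ℕ)
    (hno : ¬ ∃ M, IsMatchingIn A B g M ∧ #M = t) :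
    ∃ S ⊆ A, ∃ T ⊆ B, #S < t ∧ #T < t ∧ ∀ e ∈ (A \ S) ×ˢ (B \ T), g e = false := by
  classical
  obtain ⟨M, hMmem, hMmax⟩ := exists_max_image ((A ×ˢ B).powerset.filter (IsMatchingIn A B g))
    card ⟨∅, mem_filter.2 ⟨empty_mem_powerset _, by simp [IsMatchingIn]⟩⟩
  obtain ⟨hMAB, hM⟩ := mem_filter.1 hMmem
  have hMt : #M < t := by
    by_contra! ht
    obtain ⟨M', hM'M, hM't⟩ := exists_subset_card_eq ht
    exact hno ⟨M', hM.mono hM'M, hM't⟩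
  refine ⟨M.image Prod.fst, image_subset_iff.2 fun e he => (hM.1 e he).1,
    M.image Prod.snd, image_subset_iff.2 fun e he => (hM.1 e he).2.1,
    card_image_le.trans_lt hMt, card_image_le.trans_lt hMt, ?_⟩
  rintro ⟨a, b⟩ hab
  obtain ⟨haS', hbT'⟩ := mem_product.1 hab
  obtain ⟨ha, haS⟩ := mem_sdiff.1 haS'
  obtain ⟨hb, hbT⟩ := mem_sdiff.1 hbT'
  by_contra hg
  rw [Bool.not_eq_false] at hg
  have habM : (a, b) ∉ M := fun h => haS (mem_image_of_mem Prod.fst h)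
  have hbig := hMmax _ (mem_filter.2 ⟨mem_powerset.2 (insert_subset
    (mem_product.2 ⟨ha, hb⟩) (mem_powerset.1 hMAB)), hM.insert ha hb hg haS hbT⟩)
  rw [card_insert_of_notMem habM] at hbig
  omega

lemma pr_not_exists_matching_le [Fintype V] [DecidableEq V] {p : ℝ} (hp0 : 0 ≤ p)
    (hp1 : p ≤ 1) (A B : Finset V) (t : ℕ) :
    pr (bernoulliWeight p) (fun g => ¬ ∃ M, IsMatchingIn A B g M ∧ #M = t)
      ≤ 2 ^ #A * 2 ^ #B * (1 - p) ^ ((#A + 1 - t) * (#B + 1 - t)) := by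
  have hw := bernoulliWeight_nonneg (I := V × V) hp0 hp1
  set 𝒮 := (A.powerset ×ˢ B.powerset).filter fun ST => #ST.1 < t ∧ #ST.2 < t
  calc _ ≤ pr (bernoulliWeight p)
          (fun g => ∃ ST ∈ 𝒮, ∀ e ∈ (A \ ST.1) ×ˢ (B \ ST.2), g e = false) := by
        refine pr_mono hw fun g hg => ?_
        obtain ⟨S, hS, T, hT, hSt, hTt, hST⟩ := exists_cover_of_not_exists_matching t hg
        exact ⟨(S, T), mem_filter.2 ⟨mem_product.2 ⟨mem_powerset.2 hS, mem_powerset.2 hT⟩,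
          hSt, hTt⟩, hST⟩
    _ ≤ ∑ _ST ∈ 𝒮, (1 - p) ^ ((#A + 1 - t) * (#B + 1 - t)) := by
        refine (pr_exists_le hw _ _).trans (sum_le_sum fun ST hST => ?_)
        obtain ⟨hST, hSt, hTt⟩ := mem_filter.1 hST
        obtain ⟨hS, hT⟩ := mem_product.1 hST
        rw [pr_bernoulliWeight_forall_false, card_product,
          card_sdiff_of_subset (mem_powerset.1 hS), card_sdiff_of_subset (mem_powerset.1 hT)]
        exact pow_le_pow_of_le_one (by linarith) (by linarith)
          (Nat.mul_le_mul (by omega) (by omega))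
    _ ≤ 2 ^ #A * 2 ^ #B * (1 - p) ^ ((#A + 1 - t) * (#B + 1 - t)) := by
        rw [sum_const, nsmul_eq_mul]
        gcongr
        calc (#𝒮 : ℝ) ≤ #(A.powerset ×ˢ B.powerset) := by exact_mod_cast card_filter_le _ _
          _ = 2 ^ #A * 2 ^ #B := by simp [card_product, card_powerset]

end Matching

section Triangles

variable {V : Type*} [DecidableEq V]

def triangleEdges (u : V) (e : V × V) : Finset (V × V) :=
  {(u, e.1), (e.1, e.2), (e.2, u)}

def blockedEdges {β : Type*} [DecidableEq β] (u : V) (M : Finset (V × V)) (c : V × V → β) :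
    Finset (V × V) :=
  M.filter fun e => ∃ x ∈ triangleEdges u e, ∃ y ∈ M.biUnion (triangleEdges u), y ≠ x ∧ c y = c x

variable {A B : Finset V} {g : V × V → Bool} {M : Finset (V × V)} {u : V}

lemma blockedEdges_subset {β : Type*} [DecidableEq β] (c : V × V → β) :
    blockedEdges u M c ⊆ M :=
  filter_subset _ _

lemma IsMatchingIn.pairwiseDisjoint_triangleEdges (hM : IsMatchingIn A B g M)
    (hAB : Disjoint A B) (huA : u ∉ A) (huB : u ∉ B) :
    (M : Set (V × V)).PairwiseDisjoint (triangleEdges u) := by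
  intro e he e' he' hne
  obtain ⟨h₁, h₂⟩ := hM.2 he he' hne
  obtain ⟨hA, hB, -⟩ := hM.1 e he
  obtain ⟨hA', hB', -⟩ := hM.1 e' he'
  have hAB' : ∀ x, x ∈ A → x ∈ B → False := fun x hx hy => disjoint_left.1 hAB hx hy
  rw [Function.onFun, disjoint_left]
  intro x hx hx'
  simp only [triangleEdges, mem_insert, mem_singleton] at hx hx'
  rcases hx with rfl | rfl | rfl <;> rcases hx' with h | h | h <;> rw [Prod.mk.injEq] at h
  · exact h₁ h.2
  · exact huA (h.1 ▸ hA')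
  · exact huB (h.1 ▸ hB')
  · exact huA (h.1.symm ▸ hA)
  · exact h₁ h.1
  · exact hAB' e.1 hA (h.1.symm ▸ hB')
  · exact huB (h.1.symm ▸ hB)
  · exact huB (h.2.symm ▸ hB')
  · exact h₂ h.1

lemma card_blockedEdges_le {β : Type*} [DecidableEq β] (hM : IsMatchingIn A B g M)
    (hAB : Disjoint A B) (huA : u ∉ A) (huB : u ∉ B) (c : V × V → β) :
    #(blockedEdges u M c) ≤ #((M.biUnion (triangleEdges u)).filter
      fun x => ∃ y ∈ M.biUnion (triangleEdges u), y ≠ x ∧ c y = c x) := by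
  have hwit : ∀ e ∈ blockedEdges u M c, ∃ x ∈ triangleEdges u e,
      ∃ y ∈ M.biUnion (triangleEdges u), y ≠ x ∧ c y = c x := fun e he => (mem_filter.1 he).2
  have : Nonempty V := ⟨u⟩
  choose! f hf hfrep using hwit
  refine card_le_card_of_injOn f (fun e he => ?_) (fun e₁ he₁ e₂ he₂ heq => ?_)
  · exact mem_filter.2 ⟨mem_biUnion.2 ⟨e, (mem_filter.1 he).1, hf e he⟩, hfrep e he⟩
  · by_contra hne
    refine disjoint_left.1 (hM.pairwiseDisjoint_triangleEdges hAB huA huB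
      (mem_filter.1 he₁).1 (mem_filter.1 he₂).1 hne) (hf e₁ he₁) ?_
    rw [heq]
    exact hf e₂ he₂

end Triangles

section RainbowTriangles

variable {n k : ℕ}

def IsRainbowTrianglesAt (D₀ : Fin n → Fin n → Prop) (ω : DSample n k) (u : Fin n)
    (M : Finset (Fin n × Fin n)) : Prop :=
  (∀ e ∈ M, pEdge D₀ ω e.1 e.2 ∧ pEdge D₀ ω u e.1 ∧ pEdge D₀ ω e.2 u ∧ e.1 ≠ u ∧ e.2 ≠ u) ∧
    (M : Set (Fin n × Fin n)).Pairwise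
      (fun e e' => e.1 ≠ e'.1 ∧ e.1 ≠ e'.2 ∧ e.2 ≠ e'.1 ∧ e.2 ≠ e'.2) ∧
    Set.InjOn ω.2 ↑(M.biUnion (triangleEdges u))

lemma isRainbowTrianglesAt_sdiff_blockedEdges {D₀ : Fin n → Fin n → Prop} {ω : DSample n k}
    {u : Fin n} {A B : Finset (Fin n)} (hAB : Disjoint A B) (huA : u ∉ A) (huB : u ∉ B)
    (hA : ∀ a ∈ A, D₀ u a) (hB : ∀ b ∈ B, D₀ b u) {M : Finset (Fin n × Fin n)}
    (hM : IsMatchingIn A B ω.1 M) :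
    IsRainbowTrianglesAt D₀ ω u (M \ blockedEdges u M ω.2) := by
  have hsub : M \ blockedEdges u M ω.2 ⊆ M := sdiff_subset
  have hAB' : ∀ x, x ∈ A → x ∈ B → False := fun x hx hy => disjoint_left.1 hAB hx hy
  refine ⟨fun e he => ?_, fun e he e' he' hne => ?_, fun x hx y hy hxy => ?_⟩
  · obtain ⟨heA, heB, heg⟩ := hM.1 e (hsub he)
    exact ⟨⟨fun h => hAB' _ heA (h ▸ heB), Or.inr heg⟩,
      ⟨fun h => huA (h ▸ heA), Or.inl (hA _ heA)⟩, ⟨fun h => huB (h ▸ heB), Or.inl (hB _ heB)⟩,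
      fun h => huA (h ▸ heA), fun h => huB (h ▸ heB)⟩
  · obtain ⟨h₁, h₂⟩ := hM.2 (hsub he) (hsub he') hne
    obtain ⟨heA, heB, -⟩ := hM.1 e (hsub he)
    obtain ⟨heA', heB', -⟩ := hM.1 e' (hsub he')
    exact ⟨h₁, fun h => hAB' _ heA (h ▸ heB'), fun h => hAB' _ heA' (h.symm ▸ heB), h₂⟩
  · by_contra hne
    obtain ⟨e, he, hxe⟩ := mem_biUnion.1 (mem_coe.1 hx)
    obtain ⟨e', he', hye'⟩ := mem_biUnion.1 (mem_coe.1 hy)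
    exact (mem_sdiff.1 he).2 (mem_filter.2 ⟨hsub he, x, hxe, y,
      mem_biUnion.2 ⟨e', hsub he', hye'⟩, Ne.symm hne, hxy.symm⟩)

end RainbowTriangles

section PerturbedDigraph

variable {n k : ℕ} {p : ℝ}

lemma dWeight_eq_mul : dWeight n k p =
    fun ω => bernoulliWeight p ω.1 * uniformWeight (Fin n × Fin n) k ω.2 := by
  funext ω
  simp [dWeight, bernoulliWeight, uniformWeight]

lemma dWeight_nonneg (hp0 : 0 ≤ p) (hp1 : p ≤ 1) (ω : DSample n k) : 0 ≤ dWeight n k p ω := by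
  rw [dWeight_eq_mul]
  exact mul_nonneg (bernoulliWeight_nonneg hp0 hp1 _) (uniformWeight_nonneg _)

lemma sum_dWeight (hk : 0 < k) : ∑ ω, dWeight n k p ω = 1 := by
  rw [dWeight_eq_mul, Fintype.sum_prod_type]
  simp_rw [← mul_sum, sum_uniformWeight hk, mul_one, sum_bernoulliWeight]

lemma pr_uniform_two_mul_le_card_blockedEdges_le {V : Type*} [Fintype V] [DecidableEq V]
    (hk : 0 < k) {s : ℕ} (hsk : 12 * s ≤ k) {A B : Finset V} {u : V} (hAB : Disjoint A B)
    (huA : u ∉ A) (huB : u ∉ B) {g : V × V → Bool} {M : Finset (V × V)}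
    (hM : IsMatchingIn A B g M) (hMs : #M ≤ 4 * s) :
    pr (uniformWeight (V × V) k) (fun c => 2 * s ≤ #(blockedEdges u M c))
      ≤ 2 ^ (12 * s) * ((12 * s : ℕ) / k : ℝ) ^ s := by
  set S := M.biUnion (triangleEdges u)
  have hS : #S ≤ 12 * s := calc
    #S ≤ ∑ e ∈ M, #(triangleEdges u e) := card_biUnion_le
    _ ≤ #M * 3 := sum_le_card_nsmul _ _ _ fun e _ => card_le_three
    _ ≤ 12 * s := by omega
  calc _ ≤ pr (uniformWeight (V × V) k)
          (fun c => ∃ J ⊆ S, s ≤ #J ∧ ∀ x ∈ J, ∃ y ∈ S \ J, c y = c x) := by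
        refine pr_mono uniformWeight_nonneg fun c hc => ?_
        obtain ⟨J, hJS, hQJ, hJ⟩ := exists_subset_colour_repeats S c
        have : #(blockedEdges u M c) ≤ #(S.filter fun x => ∃ y ∈ S, y ≠ x ∧ c y = c x) :=
          card_blockedEdges_le hM hAB huA huB c
        exact ⟨J, hJS, by omega, hJ⟩
    _ ≤ 2 ^ #S * ((#S : ℝ) / k) ^ s := pr_exists_colour_repeats_le hk S (hS.trans hsk) s
    _ ≤ 2 ^ (12 * s) * ((12 * s : ℕ) / k : ℝ) ^ s := by
        have hS' : (#S : ℝ) ≤ (12 * s : ℕ) := by exact_mod_cast hS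
        gcongr
        norm_num

lemma pr_not_exists_rainbowTrianglesAt_le (hp0 : 0 ≤ p) (hp1 : p ≤ 1) (hk : 0 < k) {s m : ℕ}
    (hsk : 12 * s ≤ k) {D₀ : Fin n → Fin n → Prop} {u : Fin n} {A B : Finset (Fin n)}
    (hAB : Disjoint A B) (huA : u ∉ A) (huB : u ∉ B) (hA : ∀ a ∈ A, D₀ u a)
    (hB : ∀ b ∈ B, D₀ b u) (hAm : #A = m) (hBm : #B = m) :
    pr (dWeight n k p) (fun ω => ¬ ∃ M, 2 * s ≤ #M ∧ IsRainbowTrianglesAt D₀ ω u M)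
      ≤ 4 ^ m * (1 - p) ^ ((m + 1 - 4 * s) * (m + 1 - 4 * s))
        + 2 ^ (12 * s) * ((12 * s : ℕ) / k : ℝ) ^ s := by
  have hw := dWeight_nonneg (n := n) (k := k) hp0 hp1
  let HasMatching (g : Fin n × Fin n → Bool) := ∃ M, IsMatchingIn A B g M ∧ #M = 4 * s
  have hsplit : ∀ ω : DSample n k, (¬ ∃ M, 2 * s ≤ #M ∧ IsRainbowTrianglesAt D₀ ω u M) →
      ¬ HasMatching ω.1 ∨ (HasMatching ω.1 ∧ ∀ M, IsMatchingIn A B ω.1 M → #M = 4 * s →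
        2 * s ≤ #(blockedEdges u M ω.2)) := by
    refine fun ω hbad => or_iff_not_imp_left.2 fun hm => ⟨not_not.1 hm, fun M hM hMs => ?_⟩
    by_contra! hfew
    refine hbad ⟨M \ blockedEdges u M ω.2, ?_,
      isRainbowTrianglesAt_sdiff_blockedEdges hAB huA huB hA hB hM⟩
    rw [card_sdiff_of_subset (blockedEdges_subset _)]
    omega
  refine (pr_mono hw hsplit).trans ((pr_or_le hw _ _).trans (add_le_add ?_ ?_))
  · rw [dWeight_eq_mul, pr_prod_fst _ (sum_uniformWeight hk) fun g => ¬ HasMatching g]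
    calc _ ≤ _ := pr_not_exists_matching_le hp0 hp1 A B (4 * s)
      _ = _ := by rw [hAm, hBm, ← mul_pow]; norm_num
  · rw [dWeight_eq_mul]
    refine pr_prod_le (bernoulliWeight_nonneg hp0 hp1) sum_bernoulliWeight fun g => ?_
    by_cases hm : HasMatching g
    · obtain ⟨M, hM, hMs⟩ := hm
      exact (pr_mono uniformWeight_nonneg fun c hc => hc.2 M hM hMs).trans
        (pr_uniform_two_mul_le_card_blockedEdges_le hk hsk hAB huA huB hM hMs.le)
    · calc _ = (0 : ℝ) := by simp [pr, hm]
        _ ≤ _ := by positivity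

lemma ncard_setOf_eq_card_filter {α : Type*} [Fintype α] (P : α → Prop) [DecidablePred P] :
    {w | P w}.ncard = #(univ.filter P) := by
  rw [Set.ncard_eq_toFinset_card', Set.toFinset_ofPred]

lemma exists_disjoint_out_in_neighbours {D₀ : Fin n → Fin n → Prop} (hloop : ∀ v, ¬ D₀ v v)
    {m : ℕ} (hdeg : MinSemidegree D₀ (2 * m)) (u : Fin n) :
    ∃ A B : Finset (Fin n), Disjoint A B ∧ u ∉ A ∧ u ∉ B ∧ (∀ a ∈ A, D₀ u a) ∧
      (∀ b ∈ B, D₀ b u) ∧ #A = m ∧ #B = m := by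
  classical
  have hout : 2 * m ≤ #(univ.filter (D₀ u)) := by
    have := (hdeg u).1
    rw [ncard_setOf_eq_card_filter] at this
    exact_mod_cast this
  have hin : 2 * m ≤ #(univ.filter (D₀ · u)) := by
    have := (hdeg u).2
    rw [ncard_setOf_eq_card_filter] at this
    exact_mod_cast this
  obtain ⟨A, hAsub, hAm⟩ := exists_subset_card_eq (show m ≤ #(univ.filter (D₀ u)) by omega)
  have hinA : m ≤ #(univ.filter (D₀ · u) \ A) := by
    have := le_card_sdiff A (univ.filter (D₀ · u))
    omega
  obtain ⟨B, hBsub, hBm⟩ := exists_subset_card_eq hinA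
  have hA : ∀ a ∈ A, D₀ u a := fun a ha => (mem_filter.1 (hAsub ha)).2
  have hB : ∀ b ∈ B, D₀ b u := fun b hb => by simpa using (mem_sdiff.1 (hBsub hb)).1
  exact ⟨A, B, disjoint_left.2 fun a ha hb => (mem_sdiff.1 (hBsub hb)).2 ha,
    fun hu => hloop u (hA u hu), fun hu => hloop u (hB u hu), hA, hB, hAm, hBm⟩

theorem one_sub_le_pr_forall_exists_rainbowTrianglesAt (hp0 : 0 ≤ p) (hp1 : p ≤ 1) (hk : 0 < k)
    {s m : ℕ} (hsk : 12 * s ≤ k) {D₀ : Fin n → Fin n → Prop} (hloop : ∀ v, ¬ D₀ v v)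
    (hdeg : MinSemidegree D₀ (2 * m)) :
    1 - n * (4 ^ m * (1 - p) ^ ((m + 1 - 4 * s) * (m + 1 - 4 * s))
        + 2 ^ (12 * s) * ((12 * s : ℕ) / k : ℝ) ^ s)
      ≤ pr (dWeight n k p) (fun ω => ∀ u, ∃ M, 2 * s ≤ #M ∧ IsRainbowTrianglesAt D₀ ω u M) := by
  choose A B hAB huA huB hA hB hAm hBm using exists_disjoint_out_in_neighbours hloop hdeg
  refine le_trans ?_ (one_sub_sum_le_pr (dWeight_nonneg hp0 hp1) (sum_dWeight hk) univ _
    fun ω h u => not_not.1 (h u (mem_univ u)))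
  gcongr
  calc _ ≤ ∑ _u : Fin n, (4 ^ m * (1 - p) ^ ((m + 1 - 4 * s) * (m + 1 - 4 * s))
          + 2 ^ (12 * s) * ((12 * s : ℕ) / k : ℝ) ^ s) := sum_le_sum fun u _ =>
        pr_not_exists_rainbowTrianglesAt_le hp0 hp1 hk hsk (hAB u) (huA u) (huB u) (hA u) (hB u)
          (hAm u) (hBm u)
    _ = _ := by simp [mul_add]

end PerturbedDigraph

section Estimates

open Real

lemma four_pow_mul_one_sub_pow_le {p : ℝ} (hp1 : p ≤ 1) (m x : ℕ) :
    4 ^ m * (1 - p) ^ (x * x) ≤ exp (2 * m - p * x ^ 2) := by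
  have h4 : (4 : ℝ) ≤ exp 2 := by
    have := quadratic_le_exp_of_nonneg (x := 2) (by norm_num)
    linarith
  have h1p : 1 - p ≤ exp (-p) := by linarith [add_one_le_exp (-p)]
  calc 4 ^ m * (1 - p) ^ (x * x) ≤ exp 2 ^ m * exp (-p) ^ (x * x) :=
        mul_le_mul (pow_le_pow_left₀ (by norm_num) h4 m)
          (pow_le_pow_left₀ (by linarith) h1p _) (by positivity) (by positivity)
    _ = exp (2 * m - p * x ^ 2) := by
        rw [← exp_nat_mul, ← exp_nat_mul, ← exp_add]
        push_cast
        ring_nf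

lemma pow_le_exp_neg_two_mul {a : ℝ} (ha0 : 0 ≤ a) (ha : a ≤ 1 / 8) (s : ℕ) :
    a ^ s ≤ exp (-(2 * s)) := by
  have h8 : 1 / 8 ≤ exp (-2) := by
    have he : exp 2 < 8 := by
      rw [show (2 : ℝ) = 1 * 2 by norm_num, exp_mul, rpow_two]
      nlinarith [exp_one_lt_d9, exp_pos 1]
    rw [exp_neg, one_div]
    exact inv_anti₀ (exp_pos 2) he.le
  calc a ^ s ≤ exp (-2) ^ s := pow_le_pow_left₀ ha0 (ha.trans h8) s
    _ = exp (-(2 * s)) := by rw [← exp_nat_mul]; ring_nf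

lemma two_mul_le_exp_mul {γ x : ℝ} (hγ : 0 ≤ γ) (hx : 0 ≤ x) (h : 4 ≤ γ ^ 2 * x) :
    2 * x ≤ exp (γ * x) := by
  have := quadratic_le_exp_of_nonneg (mul_nonneg hγ hx)
  nlinarith [mul_le_mul_of_nonneg_right h hx]

variable {δ q γ : ℝ} {n k : ℕ}

lemma two_pow_mul_twelve_mul_ceil_le (hγ : 0 < γ) (hγq : γ ≤ q / 2 ^ 20) (hk : (k : ℝ) = q * n)
    (hqn : 2 ^ 20 ≤ q * n) : 2 ^ 15 * (12 * ⌈γ * n⌉₊ : ℕ) ≤ (k : ℝ) := by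
  have hs : (⌈γ * n⌉₊ : ℝ) < γ * n + 1 := Nat.ceil_lt_add_one (by positivity)
  have hγn : γ * n ≤ q * n / 2 ^ 20 := by
    rw [mul_div_right_comm]
    exact mul_le_mul_of_nonneg_right hγq n.cast_nonneg
  push_cast
  linarith

lemma four_pow_mul_one_sub_pow_le_exp (hδ : 0 < δ) (hδ1 : δ ≤ 1) (hγ : 0 < γ)
    (hγδ : γ ≤ δ / 32) (hδn : 32 ≤ δ ^ 2 * n) :
    4 ^ ⌊δ * n / 2⌋₊ * (1 - 32 / δ ^ 2 / n) ^
        ((⌊δ * n / 2⌋₊ + 1 - 4 * ⌈γ * n⌉₊) * (⌊δ * n / 2⌋₊ + 1 - 4 * ⌈γ * n⌉₊))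
      ≤ exp (-(2 * γ * n)) := by
  have hp1 : 32 / δ ^ 2 / n ≤ 1 := by rw [div_div]; exact div_le_one_of_le₀ hδn (by positivity)
  set m := ⌊δ * n / 2⌋₊
  set s := ⌈γ * n⌉₊
  set p := 32 / δ ^ 2 / n
  have hn : (0 : ℝ) < n := by nlinarith
  have hp : p * δ ^ 2 * n = 32 := by simp only [p]; field_simp
  have hδn' : 32 ≤ δ * n := by nlinarith
  have hm : (m : ℝ) ≤ δ * n / 2 := Nat.floor_le (by positivity)
  have hm' : δ * n / 2 < m + 1 := Nat.lt_floor_add_one _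
  have hs' : (s : ℝ) < γ * n + 1 := Nat.ceil_lt_add_one (by positivity)
  have hγn : γ * n ≤ δ * n / 32 := by nlinarith
  have h4s : 4 * s ≤ m + 1 := by
    have : (4 * s : ℝ) ≤ m + 1 := by linarith
    exact_mod_cast this
  have hx : δ * n / 4 ≤ ((m + 1 - 4 * s : ℕ) : ℝ) := by
    push_cast [h4s]
    linarith
  have hpx : 2 * n ≤ p * ((m + 1 - 4 * s : ℕ) : ℝ) ^ 2 := calc
    2 * (n : ℝ) = p * (δ * n / 4) ^ 2 := by linear_combination (-(n : ℝ) / 16) * hp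
    _ ≤ _ := by gcongr
  calc _ ≤ exp (2 * m - p * ((m + 1 - 4 * s : ℕ) : ℝ) ^ 2) := four_pow_mul_one_sub_pow_le hp1 _ _
    _ ≤ exp (-(2 * γ * n)) := exp_le_exp.2 (by nlinarith)

lemma two_pow_mul_div_pow_le_exp (hk0 : 0 < k) (hk : 2 ^ 15 * (12 * ⌈γ * n⌉₊ : ℕ) ≤ (k : ℝ)) :
    2 ^ (12 * ⌈γ * n⌉₊) * ((12 * ⌈γ * n⌉₊ : ℕ) / k : ℝ) ^ ⌈γ * n⌉₊ ≤ exp (-(2 * γ * n)) := by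
  calc _ = (2 ^ 12 * ((12 * ⌈γ * n⌉₊ : ℕ) / k : ℝ)) ^ ⌈γ * n⌉₊ := by rw [pow_mul, mul_pow]
    _ ≤ exp (-(2 * ⌈γ * n⌉₊)) := by
        refine pow_le_exp_neg_two_mul (by positivity) ?_ _
        rw [← mul_div_assoc, div_le_iff₀ (by positivity)]
        linarith
    _ ≤ exp (-(2 * γ * n)) := exp_le_exp.2 (by linarith [Nat.le_ceil (γ * n)])

lemma card_mul_failure_le_exp (hδ : 0 < δ) (hδ1 : δ ≤ 1) (hγ : 0 < γ) (hγδ : γ ≤ δ / 32)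
    (hk0 : 0 < k) (hk : 2 ^ 15 * (12 * ⌈γ * n⌉₊ : ℕ) ≤ (k : ℝ)) (hδn : 32 ≤ δ ^ 2 * n)
    (hγn : 4 ≤ γ ^ 2 * n) :
    n * (4 ^ ⌊δ * n / 2⌋₊ * (1 - 32 / δ ^ 2 / n) ^
          ((⌊δ * n / 2⌋₊ + 1 - 4 * ⌈γ * n⌉₊) * (⌊δ * n / 2⌋₊ + 1 - 4 * ⌈γ * n⌉₊))
        + 2 ^ (12 * ⌈γ * n⌉₊) * ((12 * ⌈γ * n⌉₊ : ℕ) / k : ℝ) ^ ⌈γ * n⌉₊)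
      ≤ exp (-(γ * n)) := by
  calc _ ≤ n * (exp (-(2 * γ * n)) + exp (-(2 * γ * n))) := by
        gcongr
        exacts [four_pow_mul_one_sub_pow_le_exp hδ hδ1 hγ hγδ hδn,
          two_pow_mul_div_pow_le_exp hk0 hk]
    _ ≤ exp (γ * n) * exp (-(2 * γ * n)) := by
        rw [← two_mul, ← mul_assoc, mul_comm (n : ℝ) 2]
        gcongr
        exact two_mul_le_exp_mul hγ.le n.cast_nonneg hγn
    _ = exp (-(γ * n)) := by rw [← exp_add]; ring_nf

lemma eventually_le_mul_natCast {c : ℝ} (hc : 0 < c) (b : ℝ) : ∀ᶠ n : ℕ in atTop, b ≤ c * n :=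
  (tendsto_natCast_atTop_atTop.const_mul_atTop hc).eventually_ge_atTop b

lemma two_mul_le_of_two_mul_ceil_le {x : ℝ} {m : ℕ} (h : 2 * ⌈x⌉₊ ≤ m) : 2 * x ≤ m := by
  have hm : ((2 * ⌈x⌉₊ : ℕ) : ℝ) ≤ m := by exact_mod_cast h
  push_cast at hm
  linarith [Nat.le_ceil x]

end Estimates

lemma MinSemidegree.mono {n : ℕ} {D₀ : Fin n → Fin n → Prop} {d d' : ℝ}
    (h : MinSemidegree D₀ d) (hd : d' ≤ d) : MinSemidegree D₀ d' :=
  fun v => ⟨hd.trans (h v).1, hd.trans (h v).2⟩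

theorem rainbow_triangles_through_a_vertex
    (δ q : ℝ) (hδ : 0 < δ) (hq : 0 < q) :
    ∃ C lam ρ : ℝ, 0 < C ∧ 0 < lam ∧ 0 < ρ ∧
      ∃ N : ℕ, ∀ n : ℕ, N ≤ n → ∀ k : ℕ, (k : ℝ) = q * n →
        ∀ D₀ : Fin n → Fin n → Prop,
          (∀ v : Fin n, ¬ D₀ v v) →
          MinSemidegree D₀ (δ * n) →
          1 - Real.exp (-(lam * n)) ≤
            pr (dWeight n k (C / n)) (fun ω =>
              ∀ u : Fin n,
                ∃ M : Finset (Fin n × Fin n),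
                  ρ * n ≤ (M.card : ℝ) ∧
                  -- M is a set of edges of D avoiding u, whose extensions
                  -- ux and yu are also edges of D:
                  (∀ e ∈ M, pEdge D₀ ω e.1 e.2 ∧ pEdge D₀ ω u e.1 ∧ pEdge D₀ ω e.2 u ∧
                    e.1 ≠ u ∧ e.2 ≠ u) ∧
                  -- the edges of M are pairwise vertex-disjoint:
                  (↑M : Set (Fin n × Fin n)).Pairwise
                    (fun e e' => e.1 ≠ e'.1 ∧ e.1 ≠ e'.2 ∧ e.2 ≠ e'.1 ∧ e.2 ≠ e'.2) ∧
                  -- ⋃ {ux, xy, yu} is rainbow: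
                  Set.InjOn ω.2
                    ↑(M.biUnion (fun e =>
                      ({(u, e.1), (e.1, e.2), (e.2, u)} : Finset (Fin n × Fin n))))) := by
  set δ' := min δ 1
  set γ := min (δ' / 32) (q / 2 ^ 20)
  have hδ' : 0 < δ' := lt_min hδ one_pos
  have hγ : 0 < γ := lt_min (by positivity) (by positivity)
  obtain ⟨N, hN⟩ := eventually_atTop.1 ((eventually_le_mul_natCast (pow_pos hδ' 2) 32).and
    ((eventually_le_mul_natCast hq (2 ^ 20)).and (eventually_le_mul_natCast (pow_pos hγ 2) 4)))
  refine ⟨32 / δ' ^ 2, γ, 2 * γ, by positivity, hγ, by positivity, N,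
    fun n hn k hk D₀ hloop hdeg => ?_⟩
  obtain ⟨hδn, hqn, hγn⟩ := hN n hn
  have hk0 : 0 < k := by exact_mod_cast (by positivity : (0 : ℝ) < 2 ^ 20).trans_le (hk ▸ hqn)
  have hsk := two_pow_mul_twelve_mul_ceil_le hγ (min_le_right _ _) hk hqn
  have hp0 : 0 ≤ 32 / δ' ^ 2 / n := by positivity
  have hp1 : 32 / δ' ^ 2 / n ≤ 1 := by rw [div_div]; exact div_le_one_of_le₀ hδn (by positivity)
  have hdeg' : MinSemidegree D₀ (2 * ⌊δ' * n / 2⌋₊) := hdeg.mono <| by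
    nlinarith [Nat.floor_le (by positivity : 0 ≤ δ' * n / 2), min_le_left δ 1]
  calc 1 - Real.exp (-(γ * n)) ≤ _ := by
        gcongr
        exact card_mul_failure_le_exp hδ' (min_le_right _ _) hγ (min_le_left _ _) hk0 hsk hδn hγn
    _ ≤ _ := one_sub_le_pr_forall_exists_rainbowTrianglesAt (s := ⌈γ * n⌉₊) hp0 hp1 hk0
          (by exact_mod_cast (le_mul_of_one_le_left (by positivity) (by norm_num)).trans hsk)
          hloop hdeg'
    _ ≤ _ := pr_mono (dWeight_nonneg hp0 hp1) fun ω h u => (h u).imp fun M hM =>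
          ⟨by rw [mul_assoc]; exact two_mul_le_of_two_mul_ceil_le hM.1, hM.2⟩
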